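/- Let X, Y be random variables and R an event with positive probability. If the conditional distribution of Y given X is the same whether or not we further condition on R (i.e., Y is conditionally independent of the indicator of R given X), and Z is a random variable such that the joint conditional law of (X, Z) given R equals the joint conditional law of (X, Y) given R, then the conditional law of Z given X (under the conditioning on R) equals the conditional law of Y given X. -/
import Mathlib


open MeasureTheory ProbabilityTheory

/-- MAR identifiability (abstract Theorem 1): if Y ⫫ 1_R | X and the joint conditional
law of (X, Z) given R equals that of (X, Y) given R, then the conditional law of Z
given X (conditioning on R) equals the conditional law of Y given X. -/
theorem conditional_law_identified {Ω α β : Type*}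
    [MeasurableSpace Ω] [MeasurableSpace α] [MeasurableSpace β]
    [MeasurableSingletonClass α] [MeasurableSingletonClass β]
    (μ : Measure Ω) [IsProbabilityMeasure μ]
    (X : Ω → α) (Y Z : Ω → β)
    (hX : Measurable X) (hY : Measurable Y) (hZ : Measurable Z)
    (R : Set Ω) (hR : MeasurableSet R) (hRpos : 0 < μ R)
    (hCI : ∀ x : α, 0 < μ (X ⁻¹' {x}) → ∀ y : β,
      μ[|X ⁻¹' {x}] (Y ⁻¹' {y} ∩ R)
        = μ[|X ⁻¹' {x}] (Y ⁻¹' {y}) * μ[|X ⁻¹' {x}] R)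
    (hJoint : ∀ (x : α) (y : β),
      μ[|R] (X ⁻¹' {x} ∩ Z ⁻¹' {y}) = μ[|R] (X ⁻¹' {x} ∩ Y ⁻¹' {y})) :
    ∀ (x : α) (y : β), 0 < μ (X ⁻¹' {x} ∩ R) →
      μ[|X ⁻¹' {x} ∩ R] (Z ⁻¹' {y}) = μ[|X ⁻¹' {x}] (Y ⁻¹' {y}) := by
  intro x y hpos
  have hXx : MeasurableSet (X ⁻¹' {x}) := hX (measurableSet_singleton x)
  have hXxR : MeasurableSet (X ⁻¹' {x} ∩ R) := hXx.inter hR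
  set a := μ (X ⁻¹' {x}) with ha
  set b := μ (X ⁻¹' {x} ∩ R) with hb
  set c := μ (X ⁻¹' {x} ∩ Y ⁻¹' {y}) with hc
  set d := μ (X ⁻¹' {x} ∩ (Y ⁻¹' {y} ∩ R)) with hd
  have hapos : 0 < a := lt_of_lt_of_le hpos (measure_mono Set.inter_subset_left)
  have ha0 : a ≠ 0 := hapos.ne'
  have hane : a ≠ ⊤ := measure_ne_top μ _
  have hb0 : b ≠ 0 := hpos.ne'
  have hbne : b ≠ ⊤ := measure_ne_top μ _
  have hR0 : μ R ≠ 0 := hRpos.ne'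
  -- From hJoint: the numerators coincide
  have hJ := hJoint x y
  rw [cond_apply hR, cond_apply hR] at hJ
  have hRinv0 : (μ R)⁻¹ ≠ 0 := ENNReal.inv_ne_zero.mpr (measure_ne_top μ _)
  have hRinvne : (μ R)⁻¹ ≠ ⊤ := ENNReal.inv_ne_top.mpr hR0
  have hnum : μ (R ∩ (X ⁻¹' {x} ∩ Z ⁻¹' {y})) = μ (R ∩ (X ⁻¹' {x} ∩ Y ⁻¹' {y})) := by
    calc μ (R ∩ (X ⁻¹' {x} ∩ Z ⁻¹' {y}))
        = μ R * ((μ R)⁻¹ * μ (R ∩ (X ⁻¹' {x} ∩ Z ⁻¹' {y}))) := by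
          rw [← mul_assoc, ENNReal.mul_inv_cancel hR0 (measure_ne_top μ _), one_mul]
      _ = μ R * ((μ R)⁻¹ * μ (R ∩ (X ⁻¹' {x} ∩ Y ⁻¹' {y}))) := by rw [hJ]
      _ = μ (R ∩ (X ⁻¹' {x} ∩ Y ⁻¹' {y})) := by
          rw [← mul_assoc, ENNReal.mul_inv_cancel hR0 (measure_ne_top μ _), one_mul]
  -- From hCI: d * a = c * b
  have hCI' := hCI x hapos y
  rw [cond_apply hXx, cond_apply hXx, cond_apply hXx] at hCI'
  have hdcb : d = c * a⁻¹ * b := by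
    calc d = a * (a⁻¹ * d) := by
            rw [← mul_assoc, ENNReal.mul_inv_cancel ha0 hane, one_mul]
      _ = a * ((a⁻¹ * c) * (a⁻¹ * b)) := by rw [hCI']
      _ = (a * a⁻¹) * (c * a⁻¹ * b) := by ring
      _ = c * a⁻¹ * b := by rw [ENNReal.mul_inv_cancel ha0 hane, one_mul]
  -- conclude
  rw [cond_apply hXxR, cond_apply hXx]
  have hset1 : X ⁻¹' {x} ∩ R ∩ Z ⁻¹' {y} = R ∩ (X ⁻¹' {x} ∩ Z ⁻¹' {y}) := by
    ext ω; simp only [Set.mem_inter_iff]; tauto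
  have hset2 : R ∩ (X ⁻¹' {x} ∩ Y ⁻¹' {y}) = X ⁻¹' {x} ∩ (Y ⁻¹' {y} ∩ R) := by
    ext ω; simp only [Set.mem_inter_iff]; tauto
  rw [hset1, hnum, hset2, ← hd, ← hc, hdcb]
  calc b⁻¹ * (c * a⁻¹ * b) = (a⁻¹ * c) * (b⁻¹ * b) := by ring
    _ = a⁻¹ * c := by rw [ENNReal.inv_mul_cancel hb0 hbne, mul_one]
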